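/- Induction step of the proof of Proposition 1: let D be a dictionary and s a nonempty list. Suppose s = s₁ ++ r, where s₁ is a prefix of s belonging to D of maximal length among all prefixes of s belonging to D, and suppose s also decomposes as s = s₁* ++ r*, where s₁* ∈ D is the first block of an S-optimal covering of s of size n + 1 (so r* has a covering by D of size n). Then r is a suffix of r*, and therefore the minimal covering size of r by D is at most n. -/

import Mathlib

/-- A dictionary over the alphabet `α`: a set of nonempty lists containing all
single-letter lists and closed under nonempty contiguous subsequences (infixes). -/
def IsDictionary {α : Type*} (D : Set (List α)) : Prop :=
  (∀ a : α, [a] ∈ D) ∧ (∀ t ∈ D, t ≠ []) ∧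
  (∀ t ∈ D, ∀ u : List α, u ≠ [] → u <:+: t → u ∈ D)

/-- `L` is a covering of `s` by `D`: every block of `L` belongs to `D`
and the concatenation of the blocks equals `s`. -/
def IsCovering {α : Type*} (D : Set (List α)) (L : List (List α)) (s : List α) : Prop :=
  (∀ b ∈ L, b ∈ D) ∧ L.flatten = s

/-- The minimal number of blocks of a covering of `s` by `D`. -/
noncomputable def minCover {α : Type*} (D : Set (List α)) (s : List α) : ℕ :=
  sInf {n | ∃ L, IsCovering D L s ∧ L.length = n}

/-- The covering similarity `𝒮(s,S) = (|s| - k + 1)/|s|` where `k` is the minimal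
covering size of `s` by the dictionary `D`. -/
noncomputable def covSim {α : Type*} (D : Set (List α)) (s : List α) : ℝ :=
  ((s.length : ℝ) - (minCover D s : ℝ) + 1) / (s.length : ℝ)

/- The greedy first block `s₁` is at least as long as the optimal first block `s₁'`, so `r` is a
suffix of `r'`. Cutting a covering of `r'` down to its suffix `r` keeps every block in the
dictionary (a nonempty suffix of a block is an infix of it) and does not increase the number of
blocks. -/

theorem List.IsSuffix.suffix_or_eq_append_of_suffix_append {α : Type*} {r b t : List α}
    (h : r <:+ b ++ t) : r <:+ t ∨ ∃ a, a <:+ b ∧ r = a ++ t := by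
  obtain ⟨c, hc⟩ := h
  rcases List.append_eq_append_iff.mp hc with ⟨a, rfl, rfl⟩ | ⟨c', rfl, hc'⟩
  · exact Or.inr ⟨a, List.suffix_append c a, rfl⟩
  · exact Or.inl ⟨c', hc'.symm⟩

section Covering

variable {α : Type*} {D : Set (List α)}

theorem exists_covering_of_suffix_flatten
    (hD : ∀ t ∈ D, ∀ u : List α, u ≠ [] → u <:+ t → u ∈ D)
    {L : List (List α)} (hL : ∀ b ∈ L, b ∈ D) {r : List α} (hr : r <:+ L.flatten) :
    ∃ L', IsCovering D L' r ∧ L'.length ≤ L.length := by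
  induction L generalizing r with
  | nil => exact ⟨[], ⟨by simp, (List.suffix_nil.mp hr).symm⟩, le_rfl⟩
  | cons b L ih =>
    have hLD : ∀ c ∈ L, c ∈ D := fun c hc => hL c (List.mem_cons_of_mem b hc)
    rcases hr.suffix_or_eq_append_of_suffix_append with hr | ⟨a, hab, rfl⟩
    · obtain ⟨L', hL', hlen⟩ := ih hLD hr
      exact ⟨L', hL', hlen.trans (Nat.le_succ _)⟩
    · obtain ⟨L', hL', hlen⟩ := ih hLD (List.suffix_refl L.flatten)
      by_cases ha : a = []
      · subst ha
        exact ⟨L', hL', hlen.trans (Nat.le_succ _)⟩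
      · have haD : a ∈ D := hD b (hL b List.mem_cons_self) a ha hab
        refine ⟨a :: L', ⟨?_, by rw [List.flatten_cons, hL'.2]⟩, by simpa using hlen⟩
        simpa [haD] using hL'.1

theorem minCover_le {L : List (List α)} {s : List α} (h : IsCovering D L s) :
    minCover D s ≤ L.length :=
  Nat.sInf_le ⟨L, h, rfl⟩

theorem minCover_le_of_isSuffix (hD : ∀ t ∈ D, ∀ u : List α, u ≠ [] → u <:+ t → u ∈ D)
    {L : List (List α)} {r t : List α} (hL : IsCovering D L t) (hr : r <:+ t) :
    minCover D r ≤ L.length := by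
  obtain ⟨L', hL', hlen⟩ := exists_covering_of_suffix_flatten hD hL.1 (hL.2 ▸ hr)
  exact (minCover_le hL').trans hlen

end Covering

theorem greedy_induction_step_general {α : Type*} (D : Set (List α)) (hD : IsDictionary D)
    (s s₁ r s₁' r' : List α)
    (h₁ : s₁ ++ r = s)
    (hmax : ∀ p ∈ D, p <+: s → p.length ≤ s₁.length)
    (h₂ : s₁' ++ r' = s) (h₂D : s₁' ∈ D) (n : ℕ)
    (hopt : ∃ L : List (List α), IsCovering D L r' ∧ L.length = n) :
    r <:+ r' ∧ minCover D r ≤ n := by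
  have hfirst : s₁'.length ≤ s₁.length := hmax s₁' h₂D ⟨r', h₂⟩
  have hrest : r.length ≤ r'.length := by
    have := congrArg List.length (h₁.trans h₂.symm)
    simp only [List.length_append] at this
    omega
  have hr : r <:+ r' :=
    List.suffix_of_suffix_length_le (h₁ ▸ List.suffix_append s₁ r)
      (h₂ ▸ List.suffix_append s₁' r') hrest
  obtain ⟨L, hL, rfl⟩ := hopt
  exact ⟨hr, minCover_le_of_isSuffix (fun t ht u hu hut => hD.2.2 t ht u hu hut.isInfix) hL hr⟩

/-- Induction step of the proof of Proposition 1: let `s = s₁ ++ r` where `s₁` is a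
maximal-length prefix of `s` belonging to `D`, and let `s = s₁' ++ r'` where
`s₁' ∈ D` is the first block of an S-optimal covering of `s` of size `n + 1`
(so `r'` has a covering by `D` of size `n`). Then `r` is a suffix of `r'` and the
minimal covering size of `r` by `D` is at most `n`. -/
theorem greedy_induction_step {α : Type*} (D : Set (List α)) (hD : IsDictionary D)
    (s s₁ r s₁' r' : List α) (hs : s ≠ [])
    (h₁ : s₁ ++ r = s) (h₁D : s₁ ∈ D)
    (hmax : ∀ p ∈ D, p <+: s → p.length ≤ s₁.length)
    (h₂ : s₁' ++ r' = s) (h₂D : s₁' ∈ D) (n : ℕ)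
    (hopt : ∃ L : List (List α), IsCovering D L r' ∧ L.length = n) :
    r <:+ r' ∧ minCover D r ≤ n :=
  greedy_induction_step_general D hD s s₁ r s₁' r' h₁ hmax h₂ h₂D n hopt
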